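/- Let EF be a contracting evolution frame and EF* its canonized frame, obtained by replacing each compilation comp_EF(s) with its canonical form comp_EF(s)*. Then for every knowledge state s and every EKBL formula φ, EF, s ⊨ φ if and only if EF*, s ⊨ φ; furthermore, canonical equivalence of knowledge states (strong equivalence in EF*) implies strong equivalence in EF. -/
import Mathlib


mutual
inductive SForm (Rule : Type) : Type
  | atom : Rule → SForm Rule
  | conj : SForm Rule → SForm Rule → SForm Rule
  | nnot : SForm Rule → SForm Rule
  | ex : EForm Rule → SForm Rule
  | all : EForm Rule → SForm Rule
inductive EForm (Rule : Type) : Type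
  | next : SForm Rule → EForm Rule
  | untl : SForm Rule → SForm Rule → EForm Rule
end

/-- A path in a transition system. -/
def IsPath {σ : Type} (R : σ → σ → Prop) (p : ℕ → σ) : Prop :=
  ∀ i, R (p i) (p (i + 1))

mutual
/-- Satisfaction of EKBL state formulas over a Kripke-style structure with
    states `σ`, transition relation `R`, and labelling `L`. -/
def SatS {Rule σ : Type} (R : σ → σ → Prop) (L : σ → Set Rule) : σ → SForm Rule → Prop
  | s, .atom r => r ∈ L s
  | s, .conj φ ψ => SatS R L s φ ∧ SatS R L s ψ
  | s, .nnot φ => ¬ SatS R L s φ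
  | s, .ex φ => ∃ p : ℕ → σ, IsPath R p ∧ p 0 = s ∧ SatE R L p φ
  | s, .all φ => ∀ p : ℕ → σ, IsPath R p → p 0 = s → SatE R L p φ
/-- Satisfaction of EKBL evolution formulas along a path. -/
def SatE {Rule σ : Type} (R : σ → σ → Prop) (L : σ → Set Rule) : (ℕ → σ) → EForm Rule → Prop
  | p, .next φ => SatS R L (p 1) φ
  | p, .untl φ ψ => ∃ i, SatS R L (p i) ψ ∧ ∀ j, j < i → SatS R L (p j) φ
end

structure KState (Rule Event : Type) : Type where
  kb : Set Rule
  events : List Event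

/-- Append a sequence of events to a knowledge state. -/
def KState.append {Rule Event : Type} (s : KState Rule Event) (es : List Event) :
    KState Rule Event := ⟨s.kb, s.events ++ es⟩

/-- All events of the list belong to the event class `EC`. -/
def InEC {Event : Type} (EC : Set Event) (es : List Event) : Prop := ∀ E ∈ es, E ∈ EC

/-- Successor relation on knowledge states induced by the event class `EC`. -/
def Succ {Rule Event : Type} (EC : Set Event) (s s' : KState Rule Event) : Prop :=
  ∃ E ∈ EC, s' = s.append [E]

/-- Strong equivalence of knowledge states with respect to belief operator `B`. -/
def StrongEquiv {Rule Event : Type} (B : KState Rule Event → Set Rule) (EC : Set Event)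
    (s s' : KState Rule Event) : Prop :=
  ∀ es : List Event, InEC EC es → B (s.append es) = B (s'.append es)

/-- k-equivalence of knowledge states. -/
def KEquiv {Rule Event : Type} (B : KState Rule Event → Set Rule) (EC : Set Event) (k : ℕ)
    (s s' : KState Rule Event) : Prop :=
  ∀ es : List Event, InEC EC es → es.length ≤ k → B (s.append es) = B (s'.append es)

/-- One reduction step on an update sequence (a list of finite programs): either
    remove a rule from a component that also occurs in a later component, or remove
    an empty component program. -/
inductive RedStep {Rule : Type} [DecidableEq Rule] :
    List (Finset Rule) → List (Finset Rule) → Prop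
  | dup (Ps : List (Finset Rule)) (i j : ℕ) (r : Rule) (hij : i < j) (hj : j < Ps.length)
      (hri : r ∈ Ps.getD i ∅) (hrj : r ∈ Ps.getD j ∅) :
      RedStep Ps (Ps.set i ((Ps.getD i ∅).erase r))
  | empty (Ps : List (Finset Rule)) (i : ℕ) (hi : i < Ps.length) (he : Ps.getD i ∅ = ∅) :
      RedStep Ps (Ps.eraseIdx i)

/-- An update sequence is irreducible (canonical) if no reduction step applies. -/
def IrreducibleSeq {Rule : Type} [DecidableEq Rule] (Ps : List (Finset Rule)) : Prop :=
  ∀ Qs, ¬ RedStep Ps Qs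

/-- `Bel` is a contracting belief operator: (i) deleting an empty component program
    leaves the belief set unchanged, and (ii) deleting a rule from a component that
    also occurs in a later component leaves the belief set unchanged. -/
def Contracting {Rule : Type} [DecidableEq Rule]
    (Bel : List (Finset Rule) → Set Rule) : Prop :=
  (∀ P P' : List (Finset Rule), Bel (P ++ [∅] ++ P') = Bel (P ++ P')) ∧
  (∀ (Ps : List (Finset Rule)) (i j : ℕ) (r : Rule), i < j → j < Ps.length →
      r ∈ Ps.getD i ∅ → r ∈ Ps.getD j ∅ →
      Bel (Ps.set i ((Ps.getD i ∅).erase r)) = Bel Ps)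

lemma bel_redstep {Rule : Type} [DecidableEq Rule] (Bel : List (Finset Rule) → Set Rule)
    (hc : Contracting Bel) {Ps Qs : List (Finset Rule)} (h : RedStep Ps Qs) :
    Bel Qs = Bel Ps := by
  cases h with
  | dup i j r hij hj hri hrj => exact hc.2 Ps i j r hij hj hri hrj
  | empty i hi he =>
    have hPs : Ps = Ps.take i ++ [∅] ++ Ps.drop (i + 1) := by
      conv_lhs => rw [← List.take_append_drop (i + 1) Ps]
      rw [← List.take_concat_get' Ps i hi]
      rw [List.getD_eq_getElem Ps ∅ hi] at he
      rw [he]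
    rw [List.eraseIdx_eq_take_drop_succ]
    conv_rhs => rw [hPs]
    exact (hc.1 _ _).symm

lemma bel_canon {Rule : Type} [DecidableEq Rule] (Bel : List (Finset Rule) → Set Rule)
    (hc : Contracting Bel) {Ps Qs : List (Finset Rule)}
    (h : Relation.ReflTransGen RedStep Ps Qs) : Bel Qs = Bel Ps := by
  induction h with
  | refl => rfl
  | tail _ hstep ih => rw [bel_redstep Bel hc hstep, ih]

/-- Let `EF` be a contracting evolution frame (with compilation
    `comp` and belief operator `Bel`) and let `EF*` be its canonized frame, obtained by
    replacing each compilation by its canonical form. Then every knowledge state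
    satisfies the same EKBL formulas in `EF` and `EF*`, and strong equivalence in the
    canonized frame implies strong equivalence in `EF`. -/
theorem canonized_frame_sat_iff {Rule Event : Type} [DecidableEq Rule]
    (Bel : List (Finset Rule) → Set Rule) (EC : Set Event)
    (comp : KState Rule Event → List (Finset Rule))
    (canon : List (Finset Rule) → List (Finset Rule))
    (hcanon : ∀ Ps : List (Finset Rule),
        Relation.ReflTransGen RedStep Ps (canon Ps) ∧ IrreducibleSeq (canon Ps))
    (hc : Contracting Bel) :
    (∀ (s : KState Rule Event) (φ : SForm Rule),
        SatS (Succ EC) (fun t => Bel (comp t)) s φ ↔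
          SatS (Succ EC) (fun t => Bel (canon (comp t))) s φ) ∧
    (∀ s s' : KState Rule Event,
        StrongEquiv (fun t => Bel (canon (comp t))) EC s s' →
          StrongEquiv (fun t => Bel (comp t)) EC s s') := by
  have hL : (fun t : KState Rule Event => Bel (canon (comp t))) =
      (fun t => Bel (comp t)) := by
    funext t
    exact bel_canon Bel hc (hcanon (comp t)).1
  rw [hL]
  exact ⟨fun s φ => Iff.rfl, fun s s' h => h⟩
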